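/- arXiv:2505.20227 — 2 statements merged into one kernel-verified Lean document; each statement's English description precedes it below -/
import Mathlib

section
/- For any predictor f : 𝒳 → ℝ satisfying 0 < f(x) < 1 for every x ∈ 𝒳, the expected cross-entropy risk decomposes as R(f) = ∑_{x : p_X(x) > 0} p_X(x) · KL(η(x) ‖ f(x)) + H(Y|X), where η(x) = p_{X,Y}(x, true) / p_X(x) is the conditional probability that Y = true given X = x, and KL(a‖b) = a·log(a/b) + (1−a)·log((1−a)/(1−b)) is the Kullback–Leibler divergence between Bernoulli distributions with parameters a and b (with the convention that 0·log 0 = 0). -/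
open Finset

/-- Joint probability `p_{X,Y}(x,y) = ∑_{ω : X ω = x ∧ Y ω = y} P ω`. -/
noncomputable def pJoint {Ω 𝒳 : Type*} [Fintype Ω] [DecidableEq 𝒳]
    (P : Ω → ℝ) (X : Ω → 𝒳) (Y : Ω → Bool) (x : 𝒳) (y : Bool) : ℝ :=
  ∑ ω ∈ Finset.univ.filter (fun ω => X ω = x ∧ Y ω = y), P ω

/-- Marginal probability `p_X(x) = ∑_{ω : X ω = x} P ω`. -/
noncomputable def pMarg {Ω 𝒳 : Type*} [Fintype Ω] [DecidableEq 𝒳]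
    (P : Ω → ℝ) (X : Ω → 𝒳) (x : 𝒳) : ℝ :=
  ∑ ω ∈ Finset.univ.filter (fun ω => X ω = x), P ω

/-- Conditional entropy `H(Y|X)`; terms with `p_{X,Y}(x,y) = 0` vanish since `0 · log _ = 0`. -/
noncomputable def condEnt {Ω 𝒳 : Type*} [Fintype Ω] [Fintype 𝒳] [DecidableEq 𝒳]
    (P : Ω → ℝ) (X : Ω → 𝒳) (Y : Ω → Bool) : ℝ :=
  -∑ x : 𝒳, ∑ y : Bool, pJoint P X Y x y * Real.log (pJoint P X Y x y / pMarg P X x)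

/-- Binary cross-entropy loss. -/
noncomputable def ceLoss (q : ℝ) (y : Bool) : ℝ :=
  if y then -Real.log q else -Real.log (1 - q)

/-- Expected cross-entropy risk of predictor `f`. -/
noncomputable def risk {Ω 𝒳 : Type*} [Fintype Ω]
    (P : Ω → ℝ) (X : Ω → 𝒳) (Y : Ω → Bool) (f : 𝒳 → ℝ) : ℝ :=
  ∑ ω, P ω * ceLoss (f (X ω)) (Y ω)

/-- KL divergence between Bernoulli distributions with parameters `a` and `b`;
the convention `0 · log 0 = 0` is automatic since `0 * _ = 0` in `ℝ`. -/
noncomputable def klBer (a b : ℝ) : ℝ :=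
  a * Real.log (a / b) + (1 - a) * Real.log ((1 - a) / (1 - b))

/-!
Given `X = x`, the loss of `f` is the Bernoulli cross-entropy of `f x` against `η x`, which splits
as `KL(η x ‖ f x)` plus the binary entropy of `η x`; weighted by `p_X(x)` and summed over `x`, the
entropy terms add up to `H(Y|X)`. Values `x` with `p_X(x) = 0` contribute nothing, since both joint
probabilities then vanish.
-/

open Real

lemma mul_log_div_eq_sub {y : ℝ} (x : ℝ) (hy : y ≠ 0) :
    x * log (x / y) = x * log x - x * log y := by
  rcases eq_or_ne x 0 with rfl | hx
  · simp
  · rw [log_div hx hy, mul_sub]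

lemma klBer_add_binEntropy (a : ℝ) {q : ℝ} (hq₀ : q ≠ 0) (hq₁ : q ≠ 1) :
    klBer a q + binEntropy a = a * ceLoss q true + (1 - a) * ceLoss q false := by
  have hq₁' : 1 - q ≠ 0 := sub_ne_zero.mpr hq₁.symm
  rw [klBer, binEntropy_eq_negMulLog_add_negMulLog_one_sub, negMulLog, negMulLog,
    mul_log_div_eq_sub a hq₀, mul_log_div_eq_sub (1 - a) hq₁']
  simp only [ceLoss, if_true, Bool.false_eq_true, if_false]
  ring

lemma mul_binEntropy_div_add (a b : ℝ) :
    (a + b) * binEntropy (a / (a + b)) = -(a * log (a / (a + b)) + b * log (b / (a + b))) := by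
  rcases eq_or_ne (a + b) 0 with hab | hab
  · simp [hab] -- both sides vanish because `x / 0 = 0` and `log 0 = 0`
  have h_one_sub : 1 - a / (a + b) = b / (a + b) := by field_simp; ring
  rw [binEntropy_eq_negMulLog_add_negMulLog_one_sub, h_one_sub, negMulLog, negMulLog]
  field_simp
  ring

lemma mul_ceLoss_add_mul_ceLoss {a b q : ℝ} (hab : a + b ≠ 0) (hq₀ : q ≠ 0) (hq₁ : q ≠ 1) :
    a * ceLoss q true + b * ceLoss q false =
      (a + b) * (klBer (a / (a + b)) q + binEntropy (a / (a + b))) := by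
  have h_one_sub : 1 - a / (a + b) = b / (a + b) := by field_simp; ring
  rw [klBer_add_binEntropy _ hq₀ hq₁, h_one_sub]
  field_simp

section
variable {Ω 𝒳 : Type*} [Fintype Ω] [DecidableEq 𝒳] (P : Ω → ℝ) (X : Ω → 𝒳) (Y : Ω → Bool)

lemma pJoint_nonneg (hP0 : ∀ ω, 0 ≤ P ω) (x : 𝒳) (y : Bool) : 0 ≤ pJoint P X Y x y :=
  sum_nonneg fun ω _ => hP0 ω

lemma pJoint_true_add_pJoint_false (x : 𝒳) :
    pJoint P X Y x true + pJoint P X Y x false = pMarg P X x := by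
  rw [pMarg, ← sum_filter_add_sum_filter_not _ (fun ω => Y ω = true), filter_filter,
    filter_filter]
  simp only [pJoint, Bool.not_eq_true]

lemma pMarg_nonneg (hP0 : ∀ ω, 0 ≤ P ω) (x : 𝒳) : 0 ≤ pMarg P X x :=
  sum_nonneg fun ω _ => hP0 ω

lemma risk_eq_sum_pJoint_mul_ceLoss [Fintype 𝒳] (f : 𝒳 → ℝ) :
    risk P X Y f = ∑ x, ∑ y, pJoint P X Y x y * ceLoss (f x) y := by
  rw [risk, ← sum_fiberwise_of_maps_to (g := fun ω => (X ω, Y ω)) (t := univ)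
    (fun ω _ => mem_univ _), Fintype.sum_prod_type]
  refine sum_congr rfl fun x _ => sum_congr rfl fun y _ => ?_
  rw [pJoint, sum_mul]
  refine sum_congr (by ext; simp [Prod.ext_iff]) fun ω hω => ?_
  obtain ⟨hX, hY⟩ := (mem_filter.mp hω).2
  rw [hX, hY]

lemma condEnt_eq_sum_pMarg_mul_binEntropy [Fintype 𝒳] :
    condEnt P X Y = ∑ x, pMarg P X x * binEntropy (pJoint P X Y x true / pMarg P X x) := by
  rw [condEnt, ← sum_neg_distrib]
  refine sum_congr rfl fun x _ => ?_
  rw [Fintype.sum_bool, ← pJoint_true_add_pJoint_false P X Y, mul_binEntropy_div_add]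

lemma sum_pJoint_mul_ceLoss (hP0 : ∀ ω, 0 ≤ P ω) (x : 𝒳) {q : ℝ} (hq₀ : q ≠ 0) (hq₁ : q ≠ 1) :
    ∑ y, pJoint P X Y x y * ceLoss q y =
      pMarg P X x * (klBer (pJoint P X Y x true / pMarg P X x) q +
        binEntropy (pJoint P X Y x true / pMarg P X x)) := by
  rw [Fintype.sum_bool, ← pJoint_true_add_pJoint_false P X Y]
  rcases eq_or_ne (pJoint P X Y x true + pJoint P X Y x false) 0 with hm | hm
  · obtain ⟨htrue, hfalse⟩ :=
      (add_eq_zero_iff_of_nonneg (pJoint_nonneg P X Y hP0 x true)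
        (pJoint_nonneg P X Y hP0 x false)).mp hm
    simp [htrue, hfalse]
  · exact mul_ceLoss_add_mul_ceLoss hm hq₀ hq₁

end

theorem risk_eq_kl_add_condEnt_general {Ω 𝒳 : Type*} [Fintype Ω]
    [Fintype 𝒳] [DecidableEq 𝒳]
    (P : Ω → ℝ) (hP0 : ∀ ω, 0 ≤ P ω)
    (X : Ω → 𝒳) (Y : Ω → Bool)
    (f : 𝒳 → ℝ) (hf : ∀ x, 0 < f x ∧ f x < 1) :
    risk P X Y f =
      (∑ x ∈ Finset.univ.filter (fun x => 0 < pMarg P X x),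
        pMarg P X x * klBer (pJoint P X Y x true / pMarg P X x) (f x)) +
      condEnt P X Y := by
  have h_null : ∀ x ∈ univ, pMarg P X x * klBer (pJoint P X Y x true / pMarg P X x) (f x) ≠ 0 →
      0 < pMarg P X x := fun x _ h =>
    (pMarg_nonneg P X hP0 x).lt_of_ne' (left_ne_zero_of_mul h)
  rw [sum_filter_of_ne h_null, condEnt_eq_sum_pMarg_mul_binEntropy, ← sum_add_distrib,
    risk_eq_sum_pJoint_mul_ceLoss]
  refine sum_congr rfl fun x _ => ?_
  rw [sum_pJoint_mul_ceLoss P X Y hP0 x (hf x).1.ne' (hf x).2.ne, mul_add]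

/-- the expected cross-entropy risk decomposes as
`R(f) = ∑_{x : p_X(x) > 0} p_X(x) · KL(η(x) ‖ f(x)) + H(Y|X)`, where
`η(x) = p_{X,Y}(x, true) / p_X(x)`. -/
theorem risk_eq_kl_add_condEnt {Ω 𝒳 : Type*} [Fintype Ω] [Nonempty Ω]
    [Fintype 𝒳] [DecidableEq 𝒳]
    (P : Ω → ℝ) (hP0 : ∀ ω, 0 ≤ P ω) (hP1 : ∑ ω, P ω = 1)
    (X : Ω → 𝒳) (Y : Ω → Bool)
    (f : 𝒳 → ℝ) (hf : ∀ x, 0 < f x ∧ f x < 1) :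
    risk P X Y f =
      (∑ x ∈ Finset.univ.filter (fun x => 0 < pMarg P X x),
        pMarg P X x * klBer (pJoint P X Y x true / pMarg P X x) (f x)) +
      condEnt P X Y :=
  risk_eq_kl_add_condEnt_general P hP0 X Y f hf
end

section
/- Domain-selection gap lower bound (entropy form). Let X_j : Ω → 𝒳_j for j ∈ Fin D be a family of random variables into finite types, Y : Ω → Bool, and W : Ω → ∏_{j ∈ Fin D} 𝒳_j the joint random variable defined by (W ω) j = X_j ω. Let S ⊆ Fin D be nonempty and suppose Z : Ω → 𝒵 (𝒵 finite) satisfies: for every j ∈ S there is a function g_j : 𝒳_j → 𝒵 with Z ω = g_j (X_j ω) for all ω ∈ Ω. Suppose i ∈ Fin D satisfies the optimality assumption I(X_i ; Y) = max_{j ∈ Fin D} I(X_j ; Y). Then H(Y | Z) − H(Y | W) ≥ I(X_i ; Y) − min_{j ∈ S} I(X_j ; Y). -/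
open Finset

/-- Entropy `H(Y)` of a binary random variable; `0 · log 0 = 0` is automatic. -/
noncomputable def ent {Ω : Type*} [Fintype Ω] (P : Ω → ℝ) (Y : Ω → Bool) : ℝ :=
  -∑ y : Bool, pMarg P Y y * Real.log (pMarg P Y y)

/-- Mutual information `I(X;Y) = H(Y) − H(Y|X)`. -/
noncomputable def mutInfo {Ω 𝒳 : Type*} [Fintype Ω] [Fintype 𝒳] [DecidableEq 𝒳]
    (P : Ω → ℝ) (X : Ω → 𝒳) (Y : Ω → Bool) : ℝ :=
  ent P Y - condEnt P X Y

/-!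
Pick `j ∈ S` attaining the minimum of `I(X_j ; Y)`. Since `Z` is a function of `X_j` and `X_i` is
a function of `W`, and conditioning on a function of a variable can only increase conditional
entropy, `H(Y|Z) ≥ H(Y|X_j)` and `H(Y|W) ≤ H(Y|X_i)`; subtracting gives
`H(Y|Z) - H(Y|W) ≥ H(Y|X_j) - H(Y|X_i) = I(X_i ; Y) - I(X_j ; Y)`.
The monotonicity of conditional entropy is the log-sum inequality applied fibrewise.
-/

open Real in
lemma mul_log_add_sub_le_mul_log_div {a b c : ℝ} (ha : 0 ≤ a) (hb : 0 ≤ b) (hc : 0 < c)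
    (hab : b = 0 → a = 0) : a * log c + a - b * c ≤ a * log (a / b) := by
  rcases ha.eq_or_lt with rfl | ha
  · simpa using mul_nonneg hb hc.le
  have hb : 0 < b := hb.lt_of_ne fun h => ha.ne' (hab h.symm)
  have key := one_sub_inv_le_log_of_pos (x := a / (b * c)) (by positivity)
  rw [inv_div, div_mul_eq_div_div, log_div (by positivity) hc.ne'] at key
  have := mul_le_mul_of_nonneg_left key ha.le
  rw [mul_sub, mul_one, mul_div_cancel₀ _ ha.ne'] at this
  linarith [mul_sub a (log (a / b)) (log c)]

open Real in
theorem mul_log_sum_div_sum_le_sum_mul_log_div {ι : Type*} (s : Finset ι) (a b : ι → ℝ)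
    (ha : ∀ i ∈ s, 0 ≤ a i) (hb : ∀ i ∈ s, 0 ≤ b i) (hab : ∀ i ∈ s, b i = 0 → a i = 0) :
    (∑ i ∈ s, a i) * log ((∑ i ∈ s, a i) / ∑ i ∈ s, b i) ≤ ∑ i ∈ s, a i * log (a i / b i) := by
  set A := ∑ i ∈ s, a i
  set B := ∑ i ∈ s, b i
  rcases (sum_nonneg ha).eq_or_lt with hA | hA
  · have ha0 : ∀ i ∈ s, a i = 0 := (sum_eq_zero_iff_of_nonneg ha).mp hA.symm
    rw [show A = 0 from hA.symm, zero_mul, sum_eq_zero fun i hi => by rw [ha0 i hi, zero_mul]]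
  have hB : 0 < B := (sum_nonneg hb).lt_of_ne fun hB => hA.ne' <| sum_eq_zero fun i hi =>
    hab i hi ((sum_eq_zero_iff_of_nonneg hb).mp hB.symm i hi)
  -- Sum the tangent-line bounds at the common ratio `c = A / B`.
  calc A * log (A / B) = ∑ i ∈ s, (a i * log (A / B) + a i - b i * (A / B)) := by
        rw [sum_sub_distrib, sum_add_distrib, ← sum_mul, ← sum_mul, mul_div_cancel₀ _ hB.ne']
        ring
    _ ≤ ∑ i ∈ s, a i * log (a i / b i) := sum_le_sum fun i hi =>
        mul_log_add_sub_le_mul_log_div (ha i hi) (hb i hi) (by positivity) (hab i hi)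

section

variable {Ω 𝒳 𝒵 : Type*} [Fintype Ω] [DecidableEq 𝒳] {P : Ω → ℝ}

lemma pJoint_le_pMarg (hP : ∀ ω, 0 ≤ P ω) (X : Ω → 𝒳) (Y : Ω → Bool) (x : 𝒳) (y : Bool) :
    pJoint P X Y x y ≤ pMarg P X x :=
  sum_le_sum_of_subset_of_nonneg (monotone_filter_right _ fun _ _ h => h.1) fun ω _ _ => hP ω

lemma pMarg_comp [Fintype 𝒳] [DecidableEq 𝒵] (P : Ω → ℝ) (X : Ω → 𝒳) (g : 𝒳 → 𝒵) (z : 𝒵) :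
    pMarg P (fun ω => g (X ω)) z = ∑ x ∈ univ.filter (fun x => g x = z), pMarg P X x := by
  simp only [pMarg, sum_filter (fun ω => X ω = _)]
  rw [sum_comm]
  simp [sum_filter]

lemma pJoint_comp [Fintype 𝒳] [DecidableEq 𝒵] (P : Ω → ℝ) (X : Ω → 𝒳) (Y : Ω → Bool)
    (g : 𝒳 → 𝒵) (z : 𝒵) (y : Bool) :
    pJoint P (fun ω => g (X ω)) Y z y =
      ∑ x ∈ univ.filter (fun x => g x = z), pJoint P X Y x y := by
  simp only [pJoint, sum_filter (fun ω => X ω = _ ∧ _)]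
  rw [sum_comm]
  simp [sum_filter, ite_and]

lemma condEnt_le_condEnt_of_comp [Fintype 𝒳] [Fintype 𝒵] [DecidableEq 𝒵] (hP : ∀ ω, 0 ≤ P ω)
    (X : Ω → 𝒳) (Y : Ω → Bool) {Z : Ω → 𝒵} (g : 𝒳 → 𝒵) (hZ : ∀ ω, Z ω = g (X ω)) :
    condEnt P X Y ≤ condEnt P Z Y := by
  obtain rfl : Z = fun ω => g (X ω) := funext hZ
  rw [condEnt, condEnt, neg_le_neg_iff, ← sum_fiberwise univ g]
  refine sum_le_sum fun z _ => ?_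
  rw [sum_comm]
  refine sum_le_sum fun y _ => ?_
  rw [pJoint_comp, pMarg_comp]
  exact mul_log_sum_div_sum_le_sum_mul_log_div _ _ _ (fun _ _ => sum_nonneg fun ω _ => hP ω)
    (fun _ _ => sum_nonneg fun ω _ => hP ω)
    fun x _ h => le_antisymm (h ▸ pJoint_le_pMarg hP X Y x y) (sum_nonneg fun ω _ => hP ω)

end

theorem domain_selection_gap_entropy_general {Ω 𝒵 : Type*} {D : ℕ} {𝒳 : Fin D → Type*}
    [Fintype Ω] [∀ j, Fintype (𝒳 j)] [∀ j, DecidableEq (𝒳 j)]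
    [Fintype 𝒵] [DecidableEq 𝒵]
    (P : Ω → ℝ) (hP0 : ∀ ω, 0 ≤ P ω)
    (X : ∀ j : Fin D, Ω → 𝒳 j) (Y : Ω → Bool)
    (W : Ω → ∀ j : Fin D, 𝒳 j) (hW : ∀ ω j, W ω j = X j ω)
    (S : Finset (Fin D)) (hS : S.Nonempty)
    (Z : Ω → 𝒵) (hZ : ∀ j ∈ S, ∃ g : 𝒳 j → 𝒵, ∀ ω, Z ω = g (X j ω))
    (i : Fin D) :
    condEnt P Z Y - condEnt P W Y ≥
      mutInfo P (X i) Y - S.inf' hS (fun j => mutInfo P (X j) Y) := by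
  obtain ⟨j, hjS, hj⟩ := exists_mem_eq_inf' hS fun j => mutInfo P (X j) Y
  obtain ⟨g, hg⟩ := hZ j hjS
  have hZj : condEnt P (X j) Y ≤ condEnt P Z Y := condEnt_le_condEnt_of_comp hP0 (X j) Y g hg
  have hWi : condEnt P W Y ≤ condEnt P (X i) Y :=
    condEnt_le_condEnt_of_comp hP0 W Y (fun w => w i) fun ω => (hW ω i).symm
  rw [hj, mutInfo, mutInfo]
  linarith

/-- domain-selection gap lower bound (entropy form).
With `W` the joint of the family, `Z` a deterministic function of `X j` for
each `j ∈ S`, and `i` the domain maximizing `I(X j ; Y)` (optimality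
assumption), we get `H(Y|Z) − H(Y|W) ≥ I(X i ; Y) − min_{j ∈ S} I(X j ; Y)`. -/
theorem domain_selection_gap_entropy {Ω 𝒵 : Type*} {D : ℕ} {𝒳 : Fin D → Type*}
    [Fintype Ω] [Nonempty Ω] [∀ j, Fintype (𝒳 j)] [∀ j, DecidableEq (𝒳 j)]
    [Fintype 𝒵] [DecidableEq 𝒵]
    (P : Ω → ℝ) (hP0 : ∀ ω, 0 ≤ P ω) (hP1 : ∑ ω, P ω = 1)
    (X : ∀ j : Fin D, Ω → 𝒳 j) (Y : Ω → Bool)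
    (W : Ω → ∀ j : Fin D, 𝒳 j) (hW : ∀ ω j, W ω j = X j ω)
    (S : Finset (Fin D)) (hS : S.Nonempty)
    (Z : Ω → 𝒵) (hZ : ∀ j ∈ S, ∃ g : 𝒳 j → 𝒵, ∀ ω, Z ω = g (X j ω))
    (i : Fin D)
    (hopt : mutInfo P (X i) Y =
      Finset.univ.sup' ⟨i, Finset.mem_univ i⟩ (fun j => mutInfo P (X j) Y)) :
    condEnt P Z Y - condEnt P W Y ≥
      mutInfo P (X i) Y - S.inf' hS (fun j => mutInfo P (X j) Y) :=
  domain_selection_gap_entropy_general P hP0 X Y W hW S hS Z hZ i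
end
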